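/- (Greedy subtree selection.) Let T₀ be a complete lacunary tree and let a : T₀ → [0,∞) satisfy a(P) ≤ (δ/2)|I_P| for all P ∈ T₀, and a(P) = (δ/2)|I_P| whenever P ∈ T₀ has |I_P| = 2^{−M}, for some δ > 0. Then there exists a convex subtree T ⊆ T₀ with top tile P_T = P_{T₀} such that δ/2 ≤ ‖a‖_{size(T)} and ‖a‖_{size*(T)} ≤ δ. -/
import Mathlib


open MeasureTheory Set

noncomputable section

namespace Dyadic

/-- A dyadic interval/lacunary tile: `I = [j·2^k, (j+1)·2^k)` with `-M ≤ k ≤ M`,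
`I ⊆ [0, 2^M)`.  Lacunary tiles are in bijection with dyadic intervals, so we
identify the tile `P⁺(I) = I × [1/|I|, 2/|I|)` with the data of `I`. -/
structure Tile (M : ℕ) where
  j : ℤ
  k : ℤ
  hk_lb : -(M : ℤ) ≤ k
  hk_ub : k ≤ (M : ℤ)
  hj : 0 ≤ j
  hsub : ((j : ℝ) + 1) * 2 ^ k ≤ 2 ^ (M : ℤ)

variable {M : ℕ}

/-- The side length `|I_P| = 2^k` of the spatial interval of the tile. -/
def Tile.len (P : Tile M) : ℝ := 2 ^ P.k

/-- The spatial interval `I_P` of the tile. -/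
def Tile.ival (P : Tile M) : Set ℝ :=
  Ico ((P.j : ℝ) * 2 ^ P.k) (((P.j : ℝ) + 1) * 2 ^ P.k)

/-- The order `P ≤′ Q` on lacunary tiles: `I_P ⊆ I_Q`. -/
def Tile.le (P Q : Tile M) : Prop := P.ival ⊆ Q.ival

/-- A (lacunary) tree: a collection of tiles together with a top tile. -/
structure Tree (M : ℕ) where
  tiles : Set (Tile M)
  top : Tile M
  top_mem : top ∈ tiles
  le_top : ∀ P ∈ tiles, P.le top

/-- `|I_T|`, the length of the spatial interval of the top of the tree. -/
def Tree.len (T : Tree M) : ℝ := T.top.len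

/-- A collection of tiles is convex if `P₁ ≤′ P ≤′ P₂` with `P₁, P₂` in the
collection implies `P` is in the collection. -/
def IsConvex (PP : Set (Tile M)) : Prop :=
  ∀ P₁ ∈ PP, ∀ P₂ ∈ PP, ∀ P : Tile M, P₁.le P → P.le P₂ → P ∈ PP

/-- The size `‖a‖_{size(T)} = (1/|I_T|) Σ_{P ∈ T} a(P)` of `a` on a tree `T`. -/
def treeSize (a : Tile M → ℝ) (T : Tree M) : ℝ :=
  (∑ᶠ P ∈ T.tiles, a P) / T.len

/-- The maximal size `‖a‖_{size*(PP)}`: the supremum of `‖a‖_{size(T)}` over all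
convex trees `T ⊆ PP` (by convention `0` if there are none). -/
def maxSize (a : Tile M → ℝ) (PP : Set (Tile M)) : ℝ :=
  sSup (insert 0 {s : ℝ | ∃ T : Tree M, T.tiles ⊆ PP ∧ IsConvex T.tiles ∧ s = treeSize a T})

/-- The complete tree `Tree(P) = {Q : Q ≤′ P}`. -/
def cTree (P : Tile M) : Set (Tile M) := {Q : Tile M | Q.le P}

/-- A tree `T` is complete with respect to `PP` if `T = Tree(P_T) ∩ PP`. -/
def Tree.IsCompleteIn (T : Tree M) (PP : Set (Tile M)) : Prop :=
  T.tiles = cTree T.top ∩ PP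

/-- `QQ` is an `α`-packing of the tree `T`: `QQ ⊆ T` and `Σ_{P ∈ QQ} |I_P| ≤ α|I_T|`. -/
def IsPacking (α : ℝ) (QQ : Set (Tile M)) (T : Tree M) : Prop :=
  QQ ⊆ T.tiles ∧ (∑ᶠ P ∈ QQ, Tile.len P) ≤ α * T.len

/-- `QQ` is a uniform `α`-packing of the tree `T`:
`Σ_{P ∈ QQ, I_P ⊆ J} |I_P| ≤ α|J|` for every dyadic interval `J`. -/
def IsUniformPacking (α : ℝ) (QQ : Set (Tile M)) (T : Tree M) : Prop :=
  QQ ⊆ T.tiles ∧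
    ∀ J : Tile M, (∑ᶠ P ∈ {P ∈ QQ | P.ival ⊆ J.ival}, Tile.len P) ≤ α * J.len

/-- Left half of the spatial interval. -/
def Tile.left (P : Tile M) : Set ℝ :=
  Ico ((P.j : ℝ) * 2 ^ P.k) (((P.j : ℝ) + 1 / 2) * 2 ^ P.k)

/-- Right half of the spatial interval. -/
def Tile.right (P : Tile M) : Set ℝ :=
  Ico (((P.j : ℝ) + 1 / 2) * 2 ^ P.k) (((P.j : ℝ) + 1) * 2 ^ P.k)

/-- The (mother) Haar wavelet `φ_P = |I_P|^{-1/2}(χ_{I_l} - χ_{I_r})`. -/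
def Tile.haar (P : Tile M) : ℝ → ℝ := fun x =>
  (Real.sqrt P.len)⁻¹ * (P.left.indicator 1 x - P.right.indicator 1 x)

/-- The Haar (wavelet) coefficient `Wf(P) = ⟨f, φ_P⟩`. -/
def waveCoeff (f : ℝ → ℝ) (P : Tile M) : ℝ := ∫ x, f x * P.haar x

/-- The average `[f]_{I_P} = (1/|I_P|)∫_{I_P} f`. -/
def tileAvg (f : ℝ → ℝ) (P : Tile M) : ℝ := (∫ x in P.ival, f x) / P.len

/-- The mean `‖f‖_{mean(P)} = (1/|I_P|)∫_{I_P} |f|`. -/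
def tileMean (f : ℝ → ℝ) (P : Tile M) : ℝ := (∫ x in P.ival, |f x|) / P.len

/-- The maximal mean `‖f‖_{mean*(PP)} = sup_{P ∈ PP} ‖f‖_{mean(P)}`. -/
def maxMean (f : ℝ → ℝ) (PP : Set (Tile M)) : ℝ :=
  sSup (insert 0 (tileMean f '' PP))

/-- The dyadic BMO norm `‖f‖_{BMO} = ‖|Wf|²‖_{size*(PP⁺)}^{1/2}`. -/
def bmoNorm (M : ℕ) (f : ℝ → ℝ) : ℝ :=
  Real.sqrt (maxSize (fun P : Tile M => waveCoeff f P ^ 2) univ)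

/-- The grid interval `[j·2^{-M}, (j+1)·2^{-M})` at the finest scale. -/
def gridIval (M : ℕ) (j : ℤ) : Set ℝ :=
  Ico ((j : ℝ) * 2 ^ (-(M : ℤ))) (((j : ℝ) + 1) * 2 ^ (-(M : ℤ)))

/-- A dyadic test function: supported on `[0, 2^M)` and constant on every dyadic
interval of length `2^{-M}`. -/
def IsTestFun (M : ℕ) (f : ℝ → ℝ) : Prop :=
  (∀ x : ℝ, x ∉ Ico (0 : ℝ) (2 ^ (M : ℤ)) → f x = 0) ∧
    ∀ j : ℤ, ∀ x ∈ gridIval M j, ∀ y ∈ gridIval M j, f x = f y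

/-- The `L²` norm. -/
def l2Norm (f : ℝ → ℝ) : ℝ := Real.sqrt (∫ x, f x ^ 2)

/-- The `L^∞` norm (as a supremum of values; adequate for test functions). -/
def supNorm (f : ℝ → ℝ) : ℝ := ⨆ x : ℝ, |f x|

/-- The weak `L^r` quasinorm `sup_{λ>0} λ |{|h| ≥ λ}|^{1/r}`. -/
def weakNorm (r : ℝ) (h : ℝ → ℝ) : ℝ :=
  sSup {s : ℝ | ∃ l : ℝ, 0 < l ∧ s = l * (volume {x : ℝ | l ≤ |h x|}).toReal ^ (1 / r)}

/-- The phase space projection `Π_T f = Σ_{P ∈ T} ⟨f, φ_P⟩ φ_P` onto a tree. -/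
def treeProj (T : Tree M) (f : ℝ → ℝ) : ℝ → ℝ := fun x =>
  ∑ᶠ P ∈ T.tiles, waveCoeff f P * P.haar x

/-- The high-low paraproduct `π_hl(f,g) = Σ_P Wf(P) [g]_P φ_P`. -/
def paraHL (M : ℕ) (f g : ℝ → ℝ) : ℝ → ℝ := fun x =>
  ∑ᶠ P : Tile M, waveCoeff f P * tileAvg g P * P.haar x

/-- The low-high paraproduct `π_lh(f,g) = Σ_P [f]_P Wg(P) φ_P`. -/
def paraLH (M : ℕ) (f g : ℝ → ℝ) : ℝ → ℝ := fun x =>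
  ∑ᶠ P : Tile M, tileAvg f P * waveCoeff g P * P.haar x

/-- The high-high paraproduct `π_hh(f,g) = Σ_P Wf(P) Wg(P) χ_{I_P}/|I_P|`. -/
def paraHH (M : ℕ) (f g : ℝ → ℝ) : ℝ → ℝ := fun x =>
  ∑ᶠ P : Tile M, waveCoeff f P * waveCoeff g P * P.ival.indicator 1 x / P.len

/-- The constant function `1` on `[0, 2^M)`. -/
def oneFn (M : ℕ) : ℝ → ℝ := (Ico (0 : ℝ) (2 ^ (M : ℤ))).indicator 1

/-- A perfect dyadic Calderón–Zygmund operator, recorded via its kernel `K` and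
kernel constant `A₀`. -/
structure PDCZ (M : ℕ) where
  K : ℝ → ℝ → ℝ
  A₀ : ℝ
  hA₀ : 0 < A₀
  meas : Measurable (Function.uncurry K)
  bound : ∀ x y : ℝ, x ≠ y → |K x y| ≤ A₀ / |x - y|
  perfectX : ∀ I J : Tile M, Disjoint I.ival J.ival →
    ∀ x ∈ I.ival, ∀ x' ∈ I.ival, ∀ y ∈ J.ival, K x y = K x' y
  perfectY : ∀ I J : Tile M, Disjoint I.ival J.ival →
    ∀ x ∈ I.ival, ∀ x' ∈ I.ival, ∀ y ∈ J.ival, K y x = K y x'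
  diag : ∀ I : Tile M, I.k = -(M : ℤ) → ∀ x ∈ I.ival, ∀ y ∈ I.ival, K x y = 0
  corner₁ : ∀ x ∈ Ico (0 : ℝ) (2 ^ ((M : ℤ) - 1)),
    ∀ y ∈ Ico ((2 : ℝ) ^ ((M : ℤ) - 1)) (2 ^ (M : ℤ)), K x y = 0
  corner₂ : ∀ x ∈ Ico ((2 : ℝ) ^ ((M : ℤ) - 1)) (2 ^ (M : ℤ)),
    ∀ y ∈ Ico (0 : ℝ) (2 ^ ((M : ℤ) - 1)), K x y = 0

/-- `Tf(x) = ∫ K(x,y) f(y) dy`. -/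
def PDCZ.app (Op : PDCZ M) (f : ℝ → ℝ) : ℝ → ℝ := fun x => ∫ y, Op.K x y * f y

/-- The transpose `T*f(x) = ∫ K(y,x) f(y) dy`. -/
def PDCZ.appT (Op : PDCZ M) (f : ℝ → ℝ) : ℝ → ℝ := fun x => ∫ y, Op.K y x * f y

/-- Complex-valued Haar coefficient. -/
def waveCoeffC (b : ℝ → ℂ) (P : Tile M) : ℂ := ∫ x, b x * (P.haar x : ℂ)

/-- Complex-valued average. -/
def tileAvgC (b : ℝ → ℂ) (P : Tile M) : ℂ := (∫ x in P.ival, b x) / (P.len : ℂ)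

/-- BMO norm of a complex-valued function. -/
def bmoNormC (M : ℕ) (b : ℝ → ℂ) : ℝ :=
  Real.sqrt (maxSize (fun P : Tile M => ‖waveCoeffC b P‖ ^ 2) univ)

/-- Complex-valued dyadic test functions. -/
def IsTestFunC (M : ℕ) (b : ℝ → ℂ) : Prop :=
  (∀ x : ℝ, x ∉ Ico (0 : ℝ) (2 ^ (M : ℤ)) → b x = 0) ∧
    ∀ j : ℤ, ∀ x ∈ gridIval M j, ∀ y ∈ gridIval M j, b x = b y

/-- The operator applied to a complex-valued function. -/
def PDCZ.appC (Op : PDCZ M) (b : ℝ → ℂ) : ℝ → ℂ := fun x => ∫ y, (Op.K x y : ℂ) * b y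


section Aux
attribute [local instance] Classical.propDecidable
variable {M : ℕ}

lemma Tile.len_pos (P : Tile M) : 0 < P.len := zpow_pos (by norm_num) _

lemma two_zpow_pos (k : ℤ) : (0:ℝ) < 2 ^ k := zpow_pos (by norm_num) _

lemma two_zpow_pred (k : ℤ) : (2:ℝ) ^ (k-1) * 2 = 2 ^ k := by
  rw [← zpow_add_one₀ (two_ne_zero)]; ring_nf

lemma Tile.left_mem_ival (P : Tile M) : (P.j : ℝ) * 2 ^ P.k ∈ P.ival := by
  exact ⟨le_refl _, mul_lt_mul_of_pos_right (by linarith) (two_zpow_pos P.k)⟩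

lemma Tile.ival_nonempty (P : Tile M) : P.ival.Nonempty := ⟨_, P.left_mem_ival⟩

lemma Tile.le_iff {P Q : Tile M} : P.le Q ↔
    (Q.j : ℝ) * 2 ^ Q.k ≤ (P.j : ℝ) * 2 ^ P.k ∧
      ((P.j : ℝ) + 1) * 2 ^ P.k ≤ ((Q.j : ℝ) + 1) * 2 ^ Q.k := by
  unfold Tile.le Tile.ival
  rw [Set.Ico_subset_Ico_iff (mul_lt_mul_of_pos_right (by linarith) (two_zpow_pos P.k))]

lemma Tile.le_rfl (P : Tile M) : P.le P := subset_rfl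

lemma Tile.le_trans {P Q R : Tile M} (h1 : P.le Q) (h2 : Q.le R) : P.le R :=
  Set.Subset.trans h1 h2

lemma Tile.k_le_of_le {P Q : Tile M} (h : P.le Q) : P.k ≤ Q.k := by
  rw [Tile.le_iff] at h
  have : (2:ℝ) ^ P.k ≤ 2 ^ Q.k := by nlinarith [h.1, h.2]
  exact le_of_not_gt fun hc => absurd this (not_le.mpr (zpow_lt_zpow_right₀ one_lt_two hc))

lemma Tile.ext' {P Q : Tile M} (hj : P.j = Q.j) (hk : P.k = Q.k) : P = Q := by
  cases P; cases Q; simp_all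

lemma Tile.eq_of_le_of_k_eq {P Q : Tile M} (h : P.le Q) (hk : P.k = Q.k) : P = Q := by
  rw [Tile.le_iff, hk] at h
  have hp := zpow_pos (by norm_num : (0:ℝ) < 2) Q.k
  have h1 : (Q.j : ℝ) ≤ P.j := le_of_mul_le_mul_right (by linarith [h.1]) hp
  have h2 : (P.j : ℝ) ≤ Q.j := by
    have := h.2
    have : ((P.j : ℝ) + 1) ≤ (Q.j : ℝ) + 1 := le_of_mul_le_mul_right this hp
    linarith
  exact Tile.ext' (by exact_mod_cast le_antisymm h2 h1) hk

lemma Tile.le_of_mem_of_mem {P S : Tile M} {x : ℝ} (hxP : x ∈ P.ival) (hxS : x ∈ S.ival)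
    (hk : P.k ≤ S.k) : P.le S := by
  obtain ⟨n, hn⟩ : ∃ n : ℕ, S.k = P.k + n := ⟨(S.k - P.k).toNat, by omega⟩
  have hpow : (2:ℝ) ^ S.k = ((2:ℤ)^n : ℤ) * 2 ^ P.k := by
    rw [hn, zpow_add₀ (two_ne_zero : (2:ℝ) ≠ 0), zpow_natCast]
    push_cast
    ring
  have hp := P.len_pos
  unfold Tile.len at hp
  obtain ⟨hP1, hP2⟩ := hxP
  obtain ⟨hS1, hS2⟩ := hxS
  rw [hpow] at hS1 hS2
  -- S.j * 2^n ≤ P.j and P.j + 1 ≤ (S.j + 1) * 2^n, as integers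
  have h1 : (S.j * 2^n : ℤ) ≤ P.j := by
    have hr : ((S.j * 2^n : ℤ) : ℝ) * 2 ^ P.k < ((P.j:ℝ) + 1) * 2 ^ P.k := by
      push_cast; push_cast at hS1; nlinarith
    have := lt_of_mul_lt_mul_right hr (le_of_lt hp)
    have : ((S.j * 2^n : ℤ) : ℝ) < (P.j : ℝ) + 1 := this
    exact_mod_cast Int.lt_add_one_iff.mp (by exact_mod_cast this)
  have h2 : P.j + 1 ≤ (S.j + 1) * 2^n := by
    have hr : ((P.j:ℝ)) * 2 ^ P.k < (((S.j+1) * 2^n : ℤ) : ℝ) * 2 ^ P.k := by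
      push_cast; push_cast at hS2; nlinarith
    have : (P.j : ℝ) < (((S.j+1) * 2^n : ℤ) : ℝ) := lt_of_mul_lt_mul_right hr (le_of_lt hp)
    exact_mod_cast Int.add_one_le_iff.mpr (by exact_mod_cast this)
  rw [Tile.le_iff]
  constructor
  · rw [hpow]
    have : ((S.j * 2^n : ℤ) : ℝ) ≤ (P.j : ℝ) := by exact_mod_cast h1
    push_cast at this ⊢
    nlinarith
  · rw [hpow]
    have : ((P.j : ℝ) + 1) ≤ (((S.j+1) * 2^n : ℤ) : ℝ) := by exact_mod_cast h2
    push_cast at this ⊢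
    nlinarith

lemma Tile.le_or_le {P S : Tile M} {x : ℝ} (hxP : x ∈ P.ival) (hxS : x ∈ S.ival) :
    P.le S ∨ S.le P := by
  rcases le_total P.k S.k with h | h
  · exact Or.inl (Tile.le_of_mem_of_mem hxP hxS h)
  · exact Or.inr (Tile.le_of_mem_of_mem hxS hxP h)

lemma Tile.le_antisymm {P Q : Tile M} (h1 : P.le Q) (h2 : Q.le P) : P = Q :=
  Tile.eq_of_le_of_k_eq h1 (_root_.le_antisymm (Tile.k_le_of_le h1) (Tile.k_le_of_le h2))

lemma Tile.k_lt_of_le_ne {P Q : Tile M} (h : P.le Q) (hne : P ≠ Q) : P.k < Q.k :=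
  lt_of_le_of_ne (Tile.k_le_of_le h) (fun hk => hne (Tile.eq_of_le_of_k_eq h hk))

end Aux
section Aux2
attribute [local instance] Classical.propDecidable
variable {M : ℕ}

lemma Tile.jR_nonneg (P : Tile M) : (0:ℝ) ≤ P.j := by exact_mod_cast P.hj

lemma Tile.j_lt (P : Tile M) : P.j < 4 ^ M := by
  have hj := P.jR_nonneg
  have h1 : ((P.j : ℝ) + 1) * 2 ^ (-(M:ℤ)) ≤ ((P.j : ℝ) + 1) * 2 ^ P.k := by
    apply mul_le_mul_of_nonneg_left _ (by linarith)
    exact zpow_le_zpow_right₀ (by norm_num) P.hk_lb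
  have h2 : ((P.j : ℝ) + 1) * 2 ^ (-(M:ℤ)) ≤ 2 ^ (M:ℤ) := h1.trans P.hsub
  have hinv : (2:ℝ) ^ (-(M:ℤ)) * 2 ^ (M:ℤ) = 1 := by
    rw [← zpow_add₀ (two_ne_zero : (2:ℝ) ≠ 0)]; simp
  have h3 : ((P.j : ℝ) + 1) ≤ 2 ^ (M:ℤ) * 2 ^ (M:ℤ) := by
    have := mul_le_mul_of_nonneg_right h2 (le_of_lt (two_zpow_pos (M:ℤ)))
    nlinarith
  have h4 : ((P.j : ℝ) + 1) ≤ ((4:ℤ) ^ M : ℤ) := by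
    rw [← zpow_add₀ (two_ne_zero : (2:ℝ) ≠ 0)] at h3
    push_cast
    calc ((P.j : ℝ) + 1) ≤ 2 ^ ((M:ℤ) + (M:ℤ)) := h3
    _ = 4 ^ M := by
        rw [show (M:ℤ) + (M:ℤ) = ((2*M : ℕ) : ℤ) by push_cast; ring, zpow_natCast,
          pow_mul]
        norm_num
  have : P.j + 1 ≤ 4 ^ M := by exact_mod_cast h4
  omega

instance : Finite (Tile M) := by
  have : Function.Injective (fun P : Tile M =>
      ((⟨P.j, by simp [Finset.mem_Ico]; exact ⟨P.hj, P.j_lt⟩⟩ : (Finset.Ico (0:ℤ) (4^M))),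
       (⟨P.k, by simp [Finset.mem_Icc]; exact ⟨P.hk_lb, P.hk_ub⟩⟩ : (Finset.Icc (-(M:ℤ)) M)))) := by
    intro P Q h
    simp only [Prod.mk.injEq, Subtype.mk.injEq] at h
    exact Tile.ext' h.1 h.2
  exact Finite.of_injective _ this

noncomputable instance : Fintype (Tile M) := Fintype.ofFinite _

def Tile.child0 (P : Tile M) (hk : -(M:ℤ) < P.k) : Tile M where
  j := 2 * P.j
  k := P.k - 1
  hk_lb := by omega
  hk_ub := by have := P.hk_ub; omega
  hj := by have := P.hj; omega
  hsub := by
    have h := P.hsub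
    have h2 := two_zpow_pred P.k
    have hp := two_zpow_pos (P.k - 1)
    have hj := P.jR_nonneg
    push_cast
    nlinarith

def Tile.child1 (P : Tile M) (hk : -(M:ℤ) < P.k) : Tile M where
  j := 2 * P.j + 1
  k := P.k - 1
  hk_lb := by omega
  hk_ub := by have := P.hk_ub; omega
  hj := by have := P.hj; omega
  hsub := by
    have h := P.hsub
    have h2 := two_zpow_pred P.k
    have hp := two_zpow_pos (P.k - 1)
    have hj := P.jR_nonneg
    push_cast
    nlinarith

lemma Tile.child0_le (P : Tile M) (hk : -(M:ℤ) < P.k) : (P.child0 hk).le P := by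
  have h2 := two_zpow_pred P.k
  have hp := two_zpow_pos (P.k - 1)
  have hj := P.jR_nonneg
  rw [Tile.le_iff]
  simp only [Tile.child0]
  push_cast
  constructor <;> nlinarith

lemma Tile.child1_le (P : Tile M) (hk : -(M:ℤ) < P.k) : (P.child1 hk).le P := by
  have h2 := two_zpow_pred P.k
  have hp := two_zpow_pos (P.k - 1)
  have hj := P.jR_nonneg
  rw [Tile.le_iff]
  simp only [Tile.child1]
  push_cast
  constructor <;> nlinarith

lemma Tile.ival_split (P : Tile M) (hk : -(M:ℤ) < P.k) :
    P.ival = (P.child0 hk).ival ∪ (P.child1 hk).ival := by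
  have h2 := two_zpow_pred P.k
  have hp := two_zpow_pos (P.k - 1)
  have hj := P.jR_nonneg
  unfold Tile.ival
  simp only [Tile.child0, Tile.child1]
  have e1 : ((2 * P.j : ℤ):ℝ) * 2 ^ (P.k-1) = (P.j:ℝ) * 2 ^ P.k := by
    push_cast; linear_combination (P.j:ℝ) * h2
  have e3 : (((2 * P.j + 1 : ℤ):ℝ) + 1) * 2 ^ (P.k-1) = ((P.j:ℝ) + 1) * 2 ^ P.k := by
    push_cast; linear_combination ((P.j:ℝ) + 1) * h2
  have e2 : (((2 * P.j : ℤ):ℝ) + 1) * 2 ^ (P.k-1) = ((2 * P.j + 1 : ℤ):ℝ) * 2 ^ (P.k-1) := by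
    push_cast; ring
  rw [e1, e3, e2, Set.Ico_union_Ico_eq_Ico]
  · push_cast; nlinarith
  · push_cast; nlinarith

lemma Tile.child0_k (P : Tile M) (hk : -(M:ℤ) < P.k) : (P.child0 hk).k = P.k - 1 := rfl
lemma Tile.child1_k (P : Tile M) (hk : -(M:ℤ) < P.k) : (P.child1 hk).k = P.k - 1 := rfl

lemma Tile.child_ne_child (P : Tile M) (hk : -(M:ℤ) < P.k) :
    ¬ ∃ Q : Tile M, Q.le (P.child0 hk) ∧ Q.le (P.child1 hk) := by
  rintro ⟨Q, h0, h1⟩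
  have := Tile.le_or_le (Q.left_mem_ival) (h0 Q.left_mem_ival)
  rcases Tile.le_or_le (h0 Q.left_mem_ival) (h1 Q.left_mem_ival) with h | h
  · have heq := Tile.eq_of_le_of_k_eq h rfl
    have : (2 * P.j : ℤ) = 2 * P.j + 1 := congrArg Tile.j heq
    omega
  · have heq := Tile.eq_of_le_of_k_eq h rfl
    have : (2 * P.j + 1 : ℤ) = 2 * P.j := congrArg Tile.j heq
    omega

lemma Tile.le_child (Q P : Tile M) (hk : -(M:ℤ) < P.k) (hle : Q.le P) (hne : Q ≠ P) :
    Q.le (P.child0 hk) ∨ Q.le (P.child1 hk) := by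
  have hkk : Q.k < P.k := Tile.k_lt_of_le_ne hle hne
  have hx : (Q.j : ℝ) * 2 ^ Q.k ∈ P.ival := hle Q.left_mem_ival
  rw [Tile.ival_split P hk] at hx
  rcases hx with hx | hx
  · exact Or.inl (Tile.le_of_mem_of_mem Q.left_mem_ival hx (by rw [Tile.child0_k]; omega))
  · exact Or.inr (Tile.le_of_mem_of_mem Q.left_mem_ival hx (by rw [Tile.child1_k]; omega))

end Aux2
section Greedy
attribute [local instance] Classical.propDecidable
variable {M : ℕ}

def chainF (top Q : Tile M) : Finset (Tile M) :=
  Finset.univ.filter (fun P => Q.le P ∧ P.le top)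

def gfun (a : Tile M → ℝ) (top Q : Tile M) : ℝ := ∑ P ∈ chainF top Q, a P / P.len

def hfun (a : Tile M → ℝ) (top Q : Tile M) : ℝ :=
  ∑ P ∈ (chainF top Q).erase Q, a P / P.len

def TTF (δ : ℝ) (a : Tile M → ℝ) (top : Tile M) : Finset (Tile M) :=
  Finset.univ.filter (fun Q => Q.le top ∧ gfun a top Q ≤ δ)

def Sfun (δ : ℝ) (a : Tile M → ℝ) (top R : Tile M) : ℝ :=
  ∑ P ∈ (TTF δ a top).filter (fun P => P.le R), a P

variable {δ : ℝ} {a : Tile M → ℝ} {top : Tile M}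

lemma mem_chainF {P Q : Tile M} : P ∈ chainF top Q ↔ Q.le P ∧ P.le top := by
  simp [chainF]

lemma mem_TTF {Q : Tile M} : Q ∈ TTF δ a top ↔ Q.le top ∧ gfun a top Q ≤ δ := by
  simp [TTF]

lemma hfun_nonneg (ha : ∀ P, 0 ≤ a P) (Q : Tile M) : 0 ≤ hfun a top Q :=
  Finset.sum_nonneg fun P _ => div_nonneg (ha P) P.len_pos.le

lemma gfun_eq {Q : Tile M} (hQ : Q.le top) :
    gfun a top Q = a Q / Q.len + hfun a top Q := by
  rw [gfun, hfun, ← Finset.add_sum_erase _ _ (mem_chainF.mpr ⟨Q.le_rfl, hQ⟩)]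

lemma gfun_mono (ha : ∀ P, 0 ≤ a P) {Q Q' : Tile M} (h : Q.le Q') :
    gfun a top Q' ≤ gfun a top Q := by
  apply Finset.sum_le_sum_of_subset_of_nonneg
  · intro P hP
    rw [mem_chainF] at hP ⊢
    exact ⟨Tile.le_trans h hP.1, hP.2⟩
  · exact fun P _ _ => div_nonneg (ha P) P.len_pos.le

lemma chainF_top : chainF top top = {top} := by
  ext P
  rw [mem_chainF, Finset.mem_singleton]
  constructor
  · rintro ⟨h1, h2⟩; exact Tile.le_antisymm h2 h1
  · rintro rfl; exact ⟨P.le_rfl, P.le_rfl⟩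

lemma hfun_top : hfun a top top = 0 := by
  rw [hfun, chainF_top, Finset.erase_singleton, Finset.sum_empty]

lemma hfun_child {R c : Tile M} (hRtop : R.le top) (hcR : c.le R) (hck : c.k = R.k - 1) :
    hfun a top c = a R / R.len + hfun a top R := by
  have hkey : (chainF top c).erase c = insert R ((chainF top R).erase R) := by
    ext P
    rw [Finset.mem_erase, mem_chainF, Finset.mem_insert, Finset.mem_erase, mem_chainF]
    constructor
    · rintro ⟨hne, hcP, hPtop⟩
      by_cases hPR : P = R
      · exact Or.inl hPR
      · refine Or.inr ⟨hPR, ?_, hPtop⟩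
        have hxP : (c.j : ℝ) * 2 ^ c.k ∈ P.ival := hcP c.left_mem_ival
        have hxR : (c.j : ℝ) * 2 ^ c.k ∈ R.ival := hcR c.left_mem_ival
        rcases Tile.le_or_le hxP hxR with h | h
        · exfalso
          have h1 : P.k < R.k := Tile.k_lt_of_le_ne h hPR
          have h2 : c.k ≤ P.k := Tile.k_le_of_le hcP
          have h3 : P.k = c.k := by omega
          exact hne (Tile.eq_of_le_of_k_eq hcP h3.symm).symm
        · exact h
    · rintro (rfl | ⟨hne, hRP, hPtop⟩)
      · refine ⟨?_, hcR, hRtop⟩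
        intro hcP
        have : P.k = c.k := congrArg Tile.k hcP
        omega
      · refine ⟨?_, Tile.le_trans hcR hRP, hPtop⟩
        rintro rfl
        have := Tile.k_le_of_le hRP
        omega
  rw [hfun, hkey, Finset.sum_insert (by simp), hfun]

lemma Sfun_nonneg (ha : ∀ P, 0 ≤ a P) (R : Tile M) : 0 ≤ Sfun δ a top R :=
  Finset.sum_nonneg fun P _ => ha P

lemma Sfun_eq_zero (ha : ∀ P, 0 ≤ a P) {R : Tile M} (hRtop : R.le top)
    (hR : R ∉ TTF δ a top) : Sfun δ a top R = 0 := by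
  rw [Sfun, Finset.sum_eq_zero]
  intro P hP
  rw [Finset.mem_filter, mem_TTF] at hP
  exfalso
  apply hR
  rw [mem_TTF]
  exact ⟨hRtop, le_trans (gfun_mono ha hP.2) hP.1.2⟩

lemma Sfun_bot {R : Tile M} (hk : R.k = -(M:ℤ)) (hR : R ∈ TTF δ a top) : Sfun δ a top R = a R := by
  have : (TTF δ a top).filter (fun P => P.le R) = {R} := by
    ext P
    rw [Finset.mem_filter, Finset.mem_singleton]
    constructor
    · rintro ⟨hP, hPR⟩
      have h1 := Tile.k_le_of_le hPR
      have h2 := P.hk_lb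
      exact Tile.eq_of_le_of_k_eq hPR (by omega)
    · rintro rfl; exact ⟨hR, Tile.le_rfl _⟩
  rw [Sfun, this, Finset.sum_singleton]

lemma Sfun_child {R : Tile M} (hR : R ∈ TTF δ a top) (hk : -(M:ℤ) < R.k) :
    Sfun δ a top R = a R + Sfun δ a top (R.child0 hk) + Sfun δ a top (R.child1 hk) := by
  have hkey : (TTF δ a top).filter (fun P => P.le R) =
      insert R (((TTF δ a top).filter (fun P => P.le (R.child0 hk))) ∪
        ((TTF δ a top).filter (fun P => P.le (R.child1 hk)))) := by
    ext P
    simp only [Finset.mem_filter, Finset.mem_insert, Finset.mem_union]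
    constructor
    · rintro ⟨hP, hPR⟩
      by_cases hPR' : P = R
      · exact Or.inl hPR'
      · rcases Tile.le_child P R hk hPR hPR' with h | h
        · exact Or.inr (Or.inl ⟨hP, h⟩)
        · exact Or.inr (Or.inr ⟨hP, h⟩)
    · rintro (rfl | ⟨hP, h⟩ | ⟨hP, h⟩)
      · exact ⟨hR, P.le_rfl⟩
      · exact ⟨hP, Tile.le_trans h (R.child0_le hk)⟩
      · exact ⟨hP, Tile.le_trans h (R.child1_le hk)⟩
  have hnR : R ∉ ((TTF δ a top).filter (fun P => P.le (R.child0 hk))) ∪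
      ((TTF δ a top).filter (fun P => P.le (R.child1 hk))) := by
    simp only [Finset.mem_union, Finset.mem_filter]
    rintro (⟨_, h⟩ | ⟨_, h⟩) <;>
    · have := Tile.k_le_of_le h
      simp only [Tile.child0_k, Tile.child1_k] at this
      omega
  have hdisj : Disjoint ((TTF δ a top).filter (fun P => P.le (R.child0 hk)))
      ((TTF δ a top).filter (fun P => P.le (R.child1 hk))) := by
    rw [Finset.disjoint_left]
    intro P h1 h2
    rw [Finset.mem_filter] at h1 h2
    exact Tile.child_ne_child R hk ⟨P, h1.2, h2.2⟩
  rw [Sfun, hkey, Finset.sum_insert hnR, Finset.sum_union hdisj]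
  ring_nf
  rfl

end Greedy
section Main
attribute [local instance] Classical.propDecidable
variable {M : ℕ} {δ : ℝ} {a : Tile M → ℝ} {top : Tile M}

lemma main_bounds (hδ : 0 < δ) (ha : ∀ P, 0 ≤ a P)
    (hsmall : ∀ P : Tile M, P.le top → a P ≤ δ / 2 * P.len)
    (hend : ∀ P : Tile M, P.le top → P.k = -(M:ℤ) → a P = δ / 2 * P.len) :
    ∀ n : ℕ, ∀ R : Tile M, (R.k + M).toNat = n → R ∈ TTF δ a top →
      (δ/2 - hfun a top R) * R.len ≤ Sfun δ a top R ∧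
      Sfun δ a top R ≤ (δ - hfun a top R) * R.len := by
  intro n
  induction n using Nat.strong_induction_on with
  | _ n IH =>
    intro R hn hR
    obtain ⟨hRtop, hgR⟩ := mem_TTF.mp hR
    have hgsplit : gfun a top R = a R / R.len + hfun a top R := gfun_eq hRtop
    have hL : (0:ℝ) < R.len := R.len_pos
    have haRL : a R / R.len * R.len = a R := div_mul_cancel₀ _ hL.ne'
    have hh0 : 0 ≤ hfun a top R := hfun_nonneg ha R
    by_cases hbot : R.k = -(M:ℤ)
    · have hS : Sfun δ a top R = a R := Sfun_bot hbot hR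
      have haR : a R = δ/2 * R.len := hend R hRtop hbot
      have ht : a R / R.len = δ/2 := by rw [haR]; field_simp
      have hhalf : hfun a top R ≤ δ/2 := by rw [hgsplit, ht] at hgR; linarith
      constructor
      · rw [hS, haR]; nlinarith
      · rw [hS, haR]; nlinarith
    · have hk : -(M:ℤ) < R.k := lt_of_le_of_ne R.hk_lb (Ne.symm hbot)
      have hc0top : (R.child0 hk).le top := Tile.le_trans (R.child0_le hk) hRtop
      have hc1top : (R.child1 hk).le top := Tile.le_trans (R.child1_le hk) hRtop
      have hlen0 : (R.child0 hk).len * 2 = R.len := two_zpow_pred R.k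
      have hlen1 : (R.child1 hk).len = (R.child0 hk).len := rfl
      have hlp : (0:ℝ) < (R.child0 hk).len := (R.child0 hk).len_pos
      have hf0 : hfun a top (R.child0 hk) = gfun a top R := by
        rw [hfun_child hRtop (R.child0_le hk) rfl, hgsplit]
      have hf1 : hfun a top (R.child1 hk) = gfun a top R := by
        rw [hfun_child hRtop (R.child1_le hk) rfl, hgsplit]
      have hmeas0 : ((R.child0 hk).k + M).toNat < n := by
        have h1 : (R.child0 hk).k = R.k - 1 := rfl
        omega
      have hmeas1 : ((R.child1 hk).k + M).toNat < n := by
        have h1 : (R.child1 hk).k = R.k - 1 := rfl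
        omega
      have key : ∀ c : Tile M, c.le top → hfun a top c = gfun a top R →
          (c.k + M).toNat < n → c.len = (R.child0 hk).len →
          (δ/2 - gfun a top R) * (R.child0 hk).len ≤ Sfun δ a top c ∧
          Sfun δ a top c ≤ (δ - gfun a top R) * (R.child0 hk).len := by
        intro c hctop hfc hcm hclen
        by_cases hcT : c ∈ TTF δ a top
        · have := IH _ hcm c rfl hcT
          rw [hfc, hclen] at this
          exact this
        · have hgc : δ < gfun a top c := by
            by_contra hcon
            push_neg at hcon
            exact hcT (mem_TTF.mpr ⟨hctop, hcon⟩)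
          have hac : a c / c.len ≤ δ/2 := by
            rw [div_le_iff₀ c.len_pos]
            have := hsmall c hctop
            linarith
          have hGbig : δ/2 < gfun a top R := by
            have := gfun_eq (a := a) hctop
            rw [hfc] at this
            linarith
          have hz : Sfun δ a top c = 0 := Sfun_eq_zero ha hctop hcT
          constructor
          · rw [hz]; nlinarith
          · rw [hz]; nlinarith [hgR, hlp]
      have k0 := key _ hc0top hf0 hmeas0 rfl
      have k1 := key _ hc1top hf1 hmeas1 hlen1
      have hSR := Sfun_child hR hk
      constructor
      · have : (δ/2 - hfun a top R) * R.len =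
            a R + ((δ/2 - gfun a top R) * (R.child0 hk).len) * 2 := by
          rw [hgsplit]
          linear_combination (-(δ/2 - a R / R.len - hfun a top R)) * hlen0 + haRL
        rw [this, hSR]
        linarith [k0.1, k1.1]
      · have : (δ - hfun a top R) * R.len =
            a R + ((δ - gfun a top R) * (R.child0 hk).len) * 2 := by
          rw [hgsplit]
          linear_combination (-(δ - a R / R.len - hfun a top R)) * hlen0 + haRL
        rw [this, hSR]
        linarith [k0.2, k1.2]

end Main

/-- Lemma 4.8: greedy subtree selection. -/
theorem statement6 (M : ℕ) (δ : ℝ) (hδ : 0 < δ) (T₀ : Tree M) (a : Tile M → ℝ)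
    (ha : ∀ P, 0 ≤ a P)
    (hcomplete : T₀.tiles = cTree T₀.top)
    (hsmall : ∀ P ∈ T₀.tiles, a P ≤ δ / 2 * P.len)
    (hend : ∀ P ∈ T₀.tiles, P.k = -(M : ℤ) → a P = δ / 2 * P.len) :
    ∃ T : Tree M, T.tiles ⊆ T₀.tiles ∧ IsConvex T.tiles ∧ T.top = T₀.top ∧
      δ / 2 ≤ treeSize a T ∧ maxSize a T.tiles ≤ δ := by
  classical
  set top := T₀.top with htop
  have hmem0 : ∀ P : Tile M, P.le top → P ∈ T₀.tiles := by
    intro P hP; rw [hcomplete]; exact hP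
  have hsmall' : ∀ P : Tile M, P.le top → a P ≤ δ / 2 * P.len :=
    fun P hP => hsmall P (hmem0 P hP)
  have hend' : ∀ P : Tile M, P.le top → P.k = -(M:ℤ) → a P = δ / 2 * P.len :=
    fun P hP => hend P (hmem0 P hP)
  have htopmem : top ∈ TTF δ a top := by
    rw [mem_TTF]
    refine ⟨Tile.le_rfl _, ?_⟩
    rw [gfun_eq (Tile.le_rfl _), hfun_top]
    have h1 := hsmall' top (Tile.le_rfl _)
    have hL := top.len_pos
    have : a top / top.len ≤ δ / 2 := by rw [div_le_iff₀ hL]; linarith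
    linarith
  refine ⟨⟨(↑(TTF δ a top) : Set (Tile M)), top, Finset.mem_coe.mpr htopmem,
    fun P hP => (mem_TTF.mp (Finset.mem_coe.mp hP)).1⟩, ?_, ?_, rfl, ?_, ?_⟩
  · intro P hP
    exact hmem0 P (mem_TTF.mp (Finset.mem_coe.mp hP)).1
  · intro P₁ h₁ P₂ h₂ P hle1 hle2
    rw [Finset.mem_coe, mem_TTF] at h₂ ⊢
    rw [Finset.mem_coe, mem_TTF] at h₁
    exact ⟨Tile.le_trans hle2 h₂.1, le_trans (gfun_mono ha hle1) h₁.2⟩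
  · show δ / 2 ≤ (∑ᶠ P ∈ (↑(TTF δ a top) : Set (Tile M)), a P) / top.len
    rw [finsum_mem_coe_finset]
    have hS : ∑ P ∈ TTF δ a top, a P = Sfun δ a top top := by
      rw [Sfun, Finset.filter_true_of_mem (fun P hP => (mem_TTF.mp hP).1)]
    have hmain := (main_bounds hδ ha hsmall' hend' _ top rfl htopmem).1
    rw [hfun_top] at hmain
    have hL := top.len_pos
    rw [hS, le_div_iff₀ hL]
    simpa [mul_comm] using hmain
  · apply Real.sSup_le _ hδ.le
    rintro s hs
    rcases hs with rfl | ⟨T', hsub, hconv, rfl⟩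
    · exact hδ.le
    · have hRmem : T'.top ∈ TTF δ a top := Finset.mem_coe.mp (hsub T'.top_mem)
      have hRtop : T'.top.le top := (mem_TTF.mp hRmem).1
      have hL := T'.top.len_pos
      have hsum : ∑ᶠ P ∈ T'.tiles, a P = ∑ P ∈ T'.tiles.toFinset, a P := by
        rw [← Set.coe_toFinset T'.tiles, finsum_mem_coe_finset, Set.coe_toFinset]
      have hle : ∑ P ∈ T'.tiles.toFinset, a P ≤ Sfun δ a top T'.top := by
        apply Finset.sum_le_sum_of_subset_of_nonneg
        · intro P hP
          rw [Set.mem_toFinset] at hP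
          rw [Finset.mem_filter]
          exact ⟨Finset.mem_coe.mp (hsub hP), T'.le_top P hP⟩
        · exact fun P _ _ => ha P
      have hyp := (main_bounds hδ ha hsmall' hend' _ T'.top rfl hRmem).2
      have hh := hfun_nonneg (top := top) ha T'.top
      show (∑ᶠ P ∈ T'.tiles, a P) / T'.top.len ≤ δ
      rw [hsum, div_le_iff₀ hL]
      nlinarith

end Dyadic
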